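/- arXiv:2203.08401 — 7 statements merged into one kernel-verified Lean document; each statement's English description precedes it below -/
import Mathlib

section
/- Let g be a positive integer and let b ∈ B(g) have period k. Then k divides 2g and the quotient 2g/k is odd (equivalently, k divides 2g but k does not divide g). -/
/-- `B g` : binary strings of length `2g` in which entries at distance `g` differ. -/
def IsBg (g : ℕ) (b : ZMod (2 * g) → Bool) : Prop :=
  ∀ i : ZMod (2 * g), b (i + (g : ZMod (2 * g))) = !(b i)

/-- The period of `b` : the smallest positive integer `k` such that `b (i + k) = b i`
for all `i`. -/
noncomputable def period (g : ℕ) (b : ZMod (2 * g) → Bool) : ℕ :=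
  sInf {k : ℕ | 0 < k ∧ ∀ i : ZMod (2 * g), b (i + (k : ZMod (2 * g))) = b i}

theorem stmt1 (g : ℕ) (hg : 0 < g) (b : ZMod (2 * g) → Bool) (hb : IsBg g b) :
    period g b ∣ 2 * g ∧ Odd (2 * g / period g b) := by
  set S : Set ℕ := {k : ℕ | 0 < k ∧ ∀ i : ZMod (2 * g), b (i + (k : ZMod (2 * g))) = b i}
    with hS
  have h2g : 2 * g ∈ S := by
    refine ⟨by omega, fun i => ?_⟩
    simp [ZMod.natCast_self]
  have hne : S.Nonempty := ⟨2 * g, h2g⟩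
  have hk : period g b ∈ S := Nat.sInf_mem hne
  set k := period g b with hkdef
  have hkpos := hk.1
  have hkper := hk.2
  have hmul : ∀ (q : ℕ) (i : ZMod (2 * g)), b (i + ((q * k : ℕ) : ZMod (2 * g))) = b i := by
    intro q
    induction q with
    | zero => simp
    | succ n ih =>
      intro i
      have h1 : ((n + 1) * k : ℕ) = n * k + k := by ring
      rw [h1, Nat.cast_add, ← add_assoc, hkper, ih]
  have hdvd : ∀ n : ℕ, (∀ i : ZMod (2 * g), b (i + (n : ZMod (2 * g))) = b i) → k ∣ n := by
    intro n hn
    by_contra h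
    have hrpos : 0 < n % k := Nat.pos_of_ne_zero (fun h0 => h (Nat.dvd_of_mod_eq_zero h0))
    have hrlt : n % k < k := Nat.mod_lt n hkpos
    have hcast : (n : ZMod (2 * g)) = ((n % k : ℕ) : ZMod (2 * g)) + ((n / k * k : ℕ) : ZMod (2 * g)) := by
      rw [← Nat.cast_add]
      congr 1
      exact (Nat.mod_add_div' n k).symm
    have hper : ∀ i : ZMod (2 * g), b (i + ((n % k : ℕ) : ZMod (2 * g))) = b i := by
      intro i
      have h2 := hmul (n / k) (i + ((n % k : ℕ) : ZMod (2 * g)))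
      rw [add_assoc, ← hcast, hn i] at h2
      exact h2.symm
    have hmem : n % k ∈ S := ⟨hrpos, hper⟩
    have h7 : k ≤ n % k := Nat.sInf_le hmem
    omega
  have hdg : k ∣ 2 * g := hdvd (2 * g) h2g.2
  have hnotg : ¬ k ∣ g := by
    intro ⟨m, hm⟩
    have hc : ((g : ℕ) : ZMod (2 * g)) = ((m * k : ℕ) : ZMod (2 * g)) := by
      congr 1
      rw [hm, mul_comm]
    have h3 := hb 0
    rw [hc, hmul m 0] at h3
    simp at h3
  refine ⟨hdg, ?_⟩
  rcases Nat.even_or_odd (2 * g / k) with he | ho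
  · exfalso
    obtain ⟨t, ht⟩ := he
    have h4 : k * (2 * g / k) = 2 * g := Nat.mul_div_cancel' hdg
    rw [ht] at h4
    have h5 : 2 * (k * t) = 2 * g := by rw [← h4]; ring
    have h6 : k * t = g := by omega
    exact hnotg ⟨t, h6.symm⟩
  · exact ho
end

section
/- Let g be a positive integer, let k be a divisor of 2g such that 2g/k is odd (so k is even), and let b ∈ B(g) satisfy b(i + k) = b(i) for all i ∈ ZMod (2g) (i.e., the period of b divides k). Then b(i + k/2) = ¬ b(i) for all i ∈ ZMod (2g). -/
theorem stmt2 (g k : ℕ) (hg : 0 < g) (hk : k ∣ 2 * g) (hodd : Odd (2 * g / k))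
    (b : ZMod (2 * g) → Bool) (hb : IsBg g b)
    (hper : ∀ i : ZMod (2 * g), b (i + (k : ZMod (2 * g))) = b i) :
    ∀ i : ZMod (2 * g), b (i + ((k / 2 : ℕ) : ZMod (2 * g))) = !(b i) := by
  -- iterate the period
  have hiter : ∀ (n : ℕ) (i : ZMod (2 * g)), b (i + ((n * k : ℕ) : ZMod (2 * g))) = b i := by
    intro n
    induction n with
    | zero => simp
    | succ n ih =>
      intro i
      have : ((n + 1) * k : ℕ) = (n * k : ℕ) + k := by ring
      rw [this, Nat.cast_add, ← add_assoc, hper]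
      exact ih i
  obtain ⟨t, ht⟩ := hodd
  have hkm : k * (2 * g / k) = 2 * g := Nat.mul_div_cancel' hk
  rw [ht] at hkm
  -- k is even
  have hke : 2 ∣ k := by
    have hev : Even (k * (2 * t + 1)) := ⟨g, by linarith⟩
    rcases Nat.even_mul.mp hev with h | h
    · exact h.two_dvd
    · obtain ⟨r, hr⟩ := h; omega
  obtain ⟨c, hc⟩ := hke
  have hc2 : k / 2 = c := by omega
  have hg' : g = c + t * k := by
    subst hc; nlinarith
  intro i
  have key : b (i + ((c : ℕ) : ZMod (2 * g)) + ((t * k : ℕ) : ZMod (2 * g))) = !(b i) := by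
    have h1 := hb i
    have e2 : ((g : ℕ) : ZMod (2 * g)) =
        ((c : ℕ) : ZMod (2 * g)) + ((t * k : ℕ) : ZMod (2 * g)) := by
      have := congrArg (fun n : ℕ => (n : ZMod (2 * g))) hg'
      rw [this]; push_cast; ring
    rw [e2, ← add_assoc] at h1
    exact h1
  rw [hiter t (i + ((c : ℕ) : ZMod (2 * g)))] at key
  rw [hc2]
  exact key
end

section
/- Let g be a positive integer and let k be a divisor of 2g such that 2g/k is odd (so k is even). Then the number of elements b ∈ B(g) satisfying b(i + k) = b(i) for all i ∈ ZMod (2g) (i.e., whose period divides k) is exactly 2^{k/2}. In particular, such an element b is completely determined by its values at the indices 0, 1, …, k/2 − 1, and every binary string of length k/2 arises as these values for exactly one such b. -/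
private def Faux (m : ℕ) (f : ℕ → Bool) (n : ℕ) : Bool :=
  xor (decide ((n / m) % 2 = 1)) (f (n % m))

private lemma Faux_congr {m : ℕ} (f : ℕ → Bool) {a b : ℕ}
    (h : a % (2 * m) = b % (2 * m)) : Faux m f a = Faux m f b := by
  unfold Faux
  have e1 : a % m = a % (2 * m) % m := (Nat.mod_mod_of_dvd a ⟨2, by ring⟩).symm
  have e2 : a / m % 2 = a % (2 * m) / m := by
    rw [mul_comm 2 m]; exact (Nat.mod_mul_right_div_self a m 2).symm
  have e3 : b % m = b % (2 * m) % m := (Nat.mod_mod_of_dvd b ⟨2, by ring⟩).symm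
  have e4 : b / m % 2 = b % (2 * m) / m := by
    rw [mul_comm 2 m]; exact (Nat.mod_mul_right_div_self b m 2).symm
  rw [e1, e2, e3, e4, h]

private lemma Faux_add_m {m : ℕ} (hm : 0 < m) (f : ℕ → Bool) (n : ℕ) :
    Faux m f (n + m) = !(Faux m f n) := by
  unfold Faux
  rw [Nat.add_mod_right, Nat.add_div_right n hm]
  have h2 : decide ((n / m + 1) % 2 = 1) = !decide (n / m % 2 = 1) := by
    by_cases h : n / m % 2 = 1
    · simp [h, show ¬ ((n / m + 1) % 2 = 1) by omega]
    · simp [h, show (n / m + 1) % 2 = 1 by omega]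
  rw [h2]
  cases decide (n / m % 2 = 1) <;> cases f (n % m) <;> rfl

theorem stmt3 (g k : ℕ) (hg : 0 < g) (hk : k ∣ 2 * g) (hodd : Odd (2 * g / k)) :
    Nat.card {b : ZMod (2 * g) → Bool //
        IsBg g b ∧ ∀ i : ZMod (2 * g), b (i + (k : ZMod (2 * g))) = b i} = 2 ^ (k / 2) ∧
    Function.Bijective
      (fun b : {b : ZMod (2 * g) → Bool //
          IsBg g b ∧ ∀ i : ZMod (2 * g), b (i + (k : ZMod (2 * g))) = b i} =>
        fun j : Fin (k / 2) => b.1 ((j : ℕ) : ZMod (2 * g))) := by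
  haveI : NeZero (2 * g) := ⟨by omega⟩
  have hkpos : 0 < k := by
    rcases Nat.eq_zero_or_pos k with h | h
    · exfalso; subst h; rw [Nat.div_zero] at hodd
      exact (Nat.not_odd_iff_even.2 Even.zero) hodd
    · exact h
  have hq : k * (2 * g / k) = 2 * g := Nat.mul_div_cancel' hk
  obtain ⟨t, hqt⟩ := hodd
  have h2k : 2 ∣ k := by
    have he : Even (k * (2 * g / k)) := by rw [hq]; exact even_two_mul g
    rcases Nat.even_mul.mp he with h | h
    · exact h.two_dvd
    · exfalso; rw [hqt] at h; obtain ⟨c, hc⟩ := h; omega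
  set m := k / 2 with hmdef
  have hm : k = 2 * m := by omega
  have hm0 : 0 < m := by omega
  have hgmt : g = m + k * t := by
    have h1 : k * (2 * t + 1) = 2 * g := by rw [← hqt]; exact hq
    have h2 : k * (2 * t + 1) = 2 * (k * t) + k := by ring
    omega
  have hdvd : 2 * m ∣ 2 * g := hm ▸ hk
  have hval : ∀ (x : ZMod (2 * g)) (c : ℕ),
      (x + (c : ZMod (2 * g))).val % (2 * m) = (x.val + c) % (2 * m) := by
    intro x c
    have h1 : (x + (c : ZMod (2 * g))).val = (x.val + c) % (2 * g) := by
      rw [ZMod.val_add, ZMod.val_natCast, Nat.add_mod_mod]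
    rw [h1, Nat.mod_mod_of_dvd _ hdvd]
  have key : ∀ b : {b : ZMod (2 * g) → Bool //
      IsBg g b ∧ ∀ i : ZMod (2 * g), b (i + (k : ZMod (2 * g))) = b i},
      ∀ n : ℕ, b.1 ((n : ZMod (2 * g))) = Faux m (fun r => b.1 (r : ZMod (2 * g))) n := by
    intro b n
    obtain ⟨hb1, hb2⟩ := b.2
    have hper : ∀ (s : ℕ) (x : ZMod (2 * g)),
        b.1 (x + ((k * s : ℕ) : ZMod (2 * g))) = b.1 x := by
      intro s
      induction s with
      | zero => intro x; simp
      | succ s ih =>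
        intro x
        have hc : ((k * (s + 1) : ℕ) : ZMod (2 * g))
            = ((k * s : ℕ) : ZMod (2 * g)) + (k : ZMod (2 * g)) := by push_cast; ring
        rw [hc, ← add_assoc, hb2, ih]
    have hstep : ∀ x : ZMod (2 * g), b.1 (x + (m : ZMod (2 * g))) = !(b.1 x) := by
      intro x
      have hgc : (g : ZMod (2 * g))
          = (m : ZMod (2 * g)) + ((k * t : ℕ) : ZMod (2 * g)) := by
        rw [hgmt]; push_cast; ring
      have h := hb1 x
      rw [hgc, ← add_assoc, hper t] at h
      exact h
    induction n using Nat.strong_induction_on with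
    | _ n ih =>
      by_cases h : n < m
      · unfold Faux
        rw [Nat.div_eq_of_lt h, Nat.mod_eq_of_lt h]
        simp
      · have hn : ((n : ZMod (2 * g))) = ((n - m : ℕ) : ZMod (2 * g)) + (m : ZMod (2 * g)) := by
          rw [← Nat.cast_add]; congr 1; omega
        have hn2 : n = (n - m) + m := by omega
        rw [hn, hstep, ih (n - m) (by omega)]
        conv_rhs => rw [hn2]
        rw [Faux_add_m hm0]
  have hinj : Function.Injective
      (fun b : {b : ZMod (2 * g) → Bool //
          IsBg g b ∧ ∀ i : ZMod (2 * g), b (i + (k : ZMod (2 * g))) = b i} =>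
        fun j : Fin (k / 2) => b.1 ((j : ℕ) : ZMod (2 * g))) := by
    intro b b' h
    apply Subtype.ext
    funext x
    have hx : ((x.val : ℕ) : ZMod (2 * g)) = x := ZMod.natCast_rightInverse x
    have h3 : b.1 ((x.val % m : ℕ) : ZMod (2 * g)) = b'.1 ((x.val % m : ℕ) : ZMod (2 * g)) := by
      have := congrFun h ⟨x.val % m, Nat.mod_lt _ hm0⟩
      simpa using this
    have h1 := key b x.val
    have h2 := key b' x.val
    rw [hx] at h1 h2
    rw [h1, h2]
    simp only [Faux]
    rw [h3]
  have hsurj : Function.Surjective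
      (fun b : {b : ZMod (2 * g) → Bool //
          IsBg g b ∧ ∀ i : ZMod (2 * g), b (i + (k : ZMod (2 * g))) = b i} =>
        fun j : Fin (k / 2) => b.1 ((j : ℕ) : ZMod (2 * g))) := by
    intro f
    set fN : ℕ → Bool := fun r => if h : r < m then f ⟨r, h⟩ else false with hfN
    refine ⟨⟨fun x => Faux m fN x.val, ?_, ?_⟩, ?_⟩
    · intro x
      have h1 : Faux m fN (x + (g : ZMod (2 * g))).val = Faux m fN (x.val + g) :=
        Faux_congr fN (hval x g)
      have h2 : Faux m fN (x.val + g) = !(Faux m fN x.val) := by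
        rw [show x.val + g = (x.val + k * t) + m by omega, Faux_add_m hm0]
        congr 1
        apply Faux_congr
        rw [hm, show x.val + 2 * m * t = x.val + (2 * m) * t by ring, Nat.add_mul_mod_self_left]
      simp only []
      rw [h1, h2]
    · intro x
      have h1 : Faux m fN (x + (k : ZMod (2 * g))).val = Faux m fN (x.val + k) :=
        Faux_congr fN (hval x k)
      simp only []
      rw [h1]
      apply Faux_congr
      rw [hm, Nat.add_mod_right]
    · funext j
      have hjm : (j : ℕ) < m := j.isLt
      have hj : ((j : ℕ) : ZMod (2 * g)).val = (j : ℕ) := by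
        apply ZMod.val_cast_of_lt
        have := j.isLt
        omega
      simp only [hj]
      unfold Faux
      rw [Nat.div_eq_of_lt hjm, Nat.mod_eq_of_lt hjm]
      simp [hfN, hjm]
  refine ⟨?_, hinj, hsurj⟩
  rw [Nat.card_eq_of_bijective _ ⟨hinj, hsurj⟩]
  simp [Nat.card_eq_fintype_card]
  exact hmdef.symm
end

section
/- For every positive integer g, one has 2^g = Σ_k #{b ∈ B(g) : the period of b equals k}, where the sum ranges over all divisors k of 2g for which 2g/k is odd. -/
open Finset

namespace StmtAux

def IsShift (g : ℕ) (b : ZMod (2 * g) → Bool) (k : ℕ) : Prop :=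
  ∀ i : ZMod (2 * g), b (i + (k : ZMod (2 * g))) = b i

lemma isShift_add {g : ℕ} {b : ZMod (2 * g) → Bool} {k l : ℕ}
    (hk : IsShift g b k) (hl : IsShift g b l) : IsShift g b (k + l) := by
  intro i
  have h1 := hk (i + (l : ZMod (2 * g)))
  have h2 := hl i
  push_cast
  rw [show i + ((k : ZMod (2 * g)) + l) = i + l + k by ring, h1, h2]

lemma isShift_mul {g : ℕ} {b : ZMod (2 * g) → Bool} {k : ℕ}
    (hk : IsShift g b k) : ∀ n, IsShift g b (n * k)
  | 0 => by intro i; simp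
  | (n + 1) => by
      have := isShift_add (isShift_mul hk n) hk
      simpa [Nat.succ_mul] using this

lemma isShift_two_g {g : ℕ} (b : ZMod (2 * g) → Bool) : IsShift g b (2 * g) := by
  intro i; simp [ZMod.natCast_self]

lemma period_spec {g : ℕ} (hg : 0 < g) (b : ZMod (2 * g) → Bool) :
    0 < period g b ∧ IsShift g b (period g b) :=
  Nat.sInf_mem (⟨2 * g, by omega, isShift_two_g b⟩ :
    Set.Nonempty {k : ℕ | 0 < k ∧ ∀ i : ZMod (2 * g), b (i + (k : ZMod (2 * g))) = b i})

lemma period_dvd {g : ℕ} (hg : 0 < g) {b : ZMod (2 * g) → Bool} {n : ℕ}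
    (hn : IsShift g b n) : period g b ∣ n := by
  obtain ⟨hp, hps⟩ := period_spec hg b
  set p := period g b with hpdef
  have key : IsShift g b (n % p) := by
    intro i
    have h1 := isShift_mul hps (n / p) (i + ((n % p : ℕ) : ZMod (2 * g)))
    have h2 := hn i
    have h3 : ((n % p : ℕ) : ZMod (2 * g)) + ((n / p * p : ℕ) : ZMod (2 * g))
        = (n : ZMod (2 * g)) := by
      rw [← Nat.cast_add, Nat.mod_add_div']
    rw [add_assoc, h3] at h1
    rw [← h1, h2]
  rcases Nat.eq_zero_or_pos (n % p) with h | h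
  · exact Nat.dvd_of_mod_eq_zero h
  · exfalso
    have hle : p ≤ n % p := Nat.sInf_le ⟨h, key⟩
    have := Nat.mod_lt n hp
    omega

lemma period_not_dvd_g {g : ℕ} (hg : 0 < g) {b : ZMod (2 * g) → Bool}
    (hb : IsBg g b) : ¬ period g b ∣ g := by
  rintro ⟨c, hc⟩
  obtain ⟨hp, hps⟩ := period_spec hg b
  have hsh : IsShift g b g := by
    have h := isShift_mul hps c
    rwa [mul_comm, ← hc] at h
  have h1 := hsh 0
  have h2 := hb 0
  rw [h1] at h2
  simp at h2

lemma period_mem {g : ℕ} (hg : 0 < g) {b : ZMod (2 * g) → Bool} (hb : IsBg g b) :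
    period g b ∈ (2 * g).divisors.filter (fun k => Odd (2 * g / k)) := by
  have hdvd : period g b ∣ 2 * g := period_dvd hg (isShift_two_g b)
  have hnd := period_not_dvd_g hg hb
  rw [Finset.mem_filter, Nat.mem_divisors]
  refine ⟨⟨hdvd, by omega⟩, ?_⟩
  rcases Nat.even_or_odd (2 * g / period g b) with he | ho
  · obtain ⟨c, hc⟩ := he
    have h2g : period g b * (2 * g / period g b) = 2 * g := Nat.mul_div_cancel' hdvd
    exfalso
    apply hnd
    refine ⟨c, ?_⟩
    have h3 : 2 * (period g b * c) = 2 * g := by rw [← h2g, hc]; ring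
    omega
  · exact ho

lemma fin_app_congr {g : ℕ} (f : Fin g → Bool) {a b : ℕ} (ha : a < g) (hb : b < g)
    (h : a = b) : f ⟨a, ha⟩ = f ⟨b, hb⟩ := by subst h; rfl

lemma val_add_g {g : ℕ} (hg : 0 < g) [NeZero (2 * g)] (i : ZMod (2 * g)) :
    (i + (g : ZMod (2 * g))).val = if i.val < g then i.val + g else i.val - g := by
  have hiv : i.val < 2 * g := ZMod.val_lt i
  have hg' : ((g : ℕ) : ZMod (2 * g)).val = g := ZMod.val_natCast_of_lt (by omega)
  rw [ZMod.val_add, hg']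
  split
  · rw [Nat.mod_eq_of_lt (by omega)]
  · rw [Nat.mod_eq_sub_mod (by omega), Nat.mod_eq_of_lt (by omega)]
    omega

lemma card_Bg {g : ℕ} (hg : 0 < g) :
    Nat.card {b : ZMod (2 * g) → Bool // IsBg g b} = 2 ^ g := by
  haveI : NeZero (2 * g) := ⟨by omega⟩
  have hvlt : ∀ i : ZMod (2 * g), i.val < 2 * g := fun i => ZMod.val_lt i
  let mk : (Fin g → Bool) → (ZMod (2 * g) → Bool) := fun f i =>
    if h : i.val < g then f ⟨i.val, h⟩ else !f ⟨i.val - g, by have := hvlt i; omega⟩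
  have hF : ∀ f, IsBg g (mk f) := by
    intro f i
    have hv := val_add_g hg i
    by_cases h : i.val < g
    · rw [if_pos h] at hv
      simp only [mk]
      rw [dif_neg (by omega), dif_pos h]
      exact congrArg Bool.not (fin_app_congr f _ _ (by omega))
    · rw [if_neg h] at hv
      simp only [mk]
      rw [dif_pos (by have := hvlt i; omega), dif_neg h]
      rw [Bool.not_not]
      exact fin_app_congr f _ _ (by omega)
  let F : (Fin g → Bool) → {b : ZMod (2 * g) → Bool // IsBg g b} := fun f => ⟨mk f, hF f⟩
  have hbij : Function.Bijective F := by
    constructor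
    · intro f1 f2 hEq
      funext j
      have h := congrFun (congrArg Subtype.val hEq) ((j : ℕ) : ZMod (2 * g))
      have hval : (((j : ℕ) : ZMod (2 * g))).val = (j : ℕ) :=
        ZMod.val_natCast_of_lt (by have := j.isLt; omega)
      simp only [F, mk] at h
      rw [dif_pos (by rw [hval]; exact j.isLt), dif_pos (by rw [hval]; exact j.isLt)] at h
      have e1 : (⟨(((j : ℕ) : ZMod (2 * g))).val, by rw [hval]; exact j.isLt⟩ : Fin g) = j := by
        ext; simp [hval]
      rw [e1] at h
      exact h
    · rintro ⟨b, hb⟩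
      refine ⟨fun j => b ((j : ℕ) : ZMod (2 * g)), ?_⟩
      apply Subtype.ext
      funext i
      simp only [F, mk]
      by_cases h : i.val < g
      · rw [dif_pos h]
        congr 1
        simp [ZMod.natCast_val, ZMod.cast_id]
      · rw [dif_neg h]
        have hx : (((i.val - g : ℕ)) : ZMod (2 * g)) + (g : ZMod (2 * g)) = i := by
          rw [← Nat.cast_add]
          have : i.val - g + g = i.val := by omega
          rw [this]
          simp [ZMod.natCast_val, ZMod.cast_id]
        rw [show b i = b ((((i.val - g : ℕ)) : ZMod (2 * g)) + (g : ZMod (2 * g))) by rw [hx],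
          hb]
  rw [← Nat.card_eq_of_bijective F hbij]
  simp [Nat.card_eq_fintype_card]

end StmtAux

theorem stmt4 (g : ℕ) (hg : 0 < g) :
    2 ^ g = ∑ k ∈ (2 * g).divisors.filter (fun k => Odd (2 * g / k)),
      Nat.card {b : ZMod (2 * g) → Bool // IsBg g b ∧ period g b = k} := by
  classical
  haveI : NeZero (2 * g) := ⟨by omega⟩
  rw [← StmtAux.card_Bg hg]
  rw [Nat.card_eq_fintype_card, Fintype.card_subtype]
  rw [Finset.card_eq_sum_card_fiberwise (f := period g)
    (t := (2 * g).divisors.filter (fun k => Odd (2 * g / k)))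
    (fun b hb => StmtAux.period_mem hg (by simpa using hb))]
  apply Finset.sum_congr rfl
  intro k _
  rw [Finset.filter_filter, Nat.card_eq_fintype_card, Fintype.card_subtype]
end

section
/- Let g be a positive integer and let k be a divisor of 2g such that 2g/k is odd. Then the number P(k) of elements of B(g) whose period is exactly k satisfies P(k) = Σ_{x | k, x odd} μ(x) · 2^{k/(2x)}, where μ denotes the Möbius function. In particular, this count does not depend on g (only on k). -/
open Function

variable {g : ℕ}

/-- the shift map -/
def shift (g : ℕ) : (ZMod (2 * g) → Bool) → (ZMod (2 * g) → Bool) :=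
  fun b i => b (i + 1)

lemma shift_iterate (m : ℕ) (b : ZMod (2 * g) → Bool) (i : ZMod (2 * g)) :
    (shift g)^[m] b i = b (i + (m : ZMod (2 * g))) := by
  induction m generalizing i with
  | zero => simp
  | succ n ih =>
    rw [Function.iterate_succ_apply', shift, ih, Nat.cast_add, Nat.cast_one]
    ring_nf

lemma isPeriodicPt_iff (m : ℕ) (b : ZMod (2 * g) → Bool) :
    IsPeriodicPt (shift g) m b ↔ ∀ i, b (i + (m : ZMod (2 * g))) = b i := by
  rw [IsPeriodicPt, IsFixedPt, funext_iff]
  exact forall_congr' fun i => by rw [shift_iterate]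

lemma mem_periodicPts (hg : 0 < g) (b : ZMod (2 * g) → Bool) :
    b ∈ periodicPts (shift g) := by
  refine ⟨2 * g, by omega, ?_⟩
  rw [isPeriodicPt_iff]
  intro i
  simp [ZMod.natCast_self]

lemma period_eq_minimalPeriod (hg : 0 < g) (b : ZMod (2 * g) → Bool) :
    period g b = minimalPeriod (shift g) b := by
  have hmem := mem_periodicPts hg b
  apply le_antisymm
  · apply Nat.sInf_le
    exact ⟨minimalPeriod_pos_of_mem_periodicPts hmem,
      (isPeriodicPt_iff _ _).mp (isPeriodicPt_minimalPeriod _ _)⟩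
  · have hne : {k : ℕ | 0 < k ∧ ∀ i : ZMod (2 * g), b (i + (k : ZMod (2 * g))) = b i}.Nonempty := by
      refine ⟨2 * g, by omega, fun i => by simp [ZMod.natCast_self]⟩
    obtain ⟨hpos, hper⟩ := Nat.sInf_mem hne
    exact IsPeriodicPt.minimalPeriod_le hpos ((isPeriodicPt_iff _ _).mpr hper)

lemma period_dvd_iff (hg : 0 < g) (b : ZMod (2 * g) → Bool) (m : ℕ) :
    period g b ∣ m ↔ ∀ i, b (i + (m : ZMod (2 * g))) = b i := by
  rw [period_eq_minimalPeriod hg, ← isPeriodicPt_iff_minimalPeriod_dvd, isPeriodicPt_iff]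

section Counting

variable {d : ℕ} {b : ZMod (2 * g) → Bool}

lemma inv_mul (hb : ∀ i, b (i + (d : ZMod (2 * g))) = b i) (t : ℕ) :
    ∀ i, b (i + ((d * t : ℕ) : ZMod (2 * g))) = b i := by
  induction t with
  | zero => simp
  | succ n ih =>
    intro i
    have : ((d * (n + 1) : ℕ) : ZMod (2 * g)) = ((d * n : ℕ) : ZMod (2 * g)) + d := by
      push_cast; ring
    rw [this, ← add_assoc]
    rw [show i + ((d * n : ℕ) : ZMod (2 * g)) + (d : ZMod (2 * g))
        = (i + ((d * n : ℕ) : ZMod (2 * g))) + d from rfl, hb, ih]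

lemma key_val (hg : 0 < g) (hb : ∀ i, b (i + (d : ZMod (2 * g))) = b i) (i : ZMod (2 * g)) :
    b i = b ((i.val % d : ℕ) : ZMod (2 * g)) := by
  haveI : NeZero (2 * g) := ⟨by omega⟩
  conv_lhs => rw [← ZMod.natCast_zmod_val i,
    show i.val = i.val % d + d * (i.val / d) from (Nat.mod_add_div _ _).symm,
    Nat.cast_add]
  rw [inv_mul hb]

lemma val_add_natCast_mod (hg : 0 < g) (hdvd : d ∣ 2 * g) (i : ZMod (2 * g)) (t : ℕ) :
    (i + (t : ZMod (2 * g))).val % d = (i.val + t) % d := by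
  haveI : NeZero (2 * g) := ⟨by omega⟩
  rw [ZMod.val_add, ZMod.val_natCast, Nat.mod_mod_of_dvd _ hdvd,
    Nat.add_mod, Nat.mod_mod_of_dvd _ hdvd, ← Nat.add_mod]

end Counting

lemma count_inv_even (hg : 0 < g) {d : ℕ} (hd : 0 < d) (hdvd : d ∣ 2 * g)
    (heven : ¬ Odd (2 * g / d)) :
    Nat.card {b : ZMod (2 * g) → Bool // IsBg g b ∧
      ∀ i, b (i + (d : ZMod (2 * g))) = b i} = 0 := by
  have : IsEmpty {b : ZMod (2 * g) → Bool // IsBg g b ∧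
      ∀ i, b (i + (d : ZMod (2 * g))) = b i} := by
    constructor
    rintro ⟨b, hbg, hb⟩
    rw [Nat.not_odd_iff_even] at heven
    obtain ⟨t, ht⟩ := heven
    have hdm : d * (2 * g / d) = 2 * g := Nat.mul_div_cancel' hdvd
    have h2 : 2 * (d * t) = 2 * g := by
      rw [← hdm, ht]; ring
    have hgdt : g = d * t := (Nat.eq_of_mul_eq_mul_left (by norm_num) h2).symm
    have h1 := inv_mul hb t (0 : ZMod (2 * g))
    rw [← hgdt] at h1
    have h2 := hbg 0
    rw [h1] at h2
    exact (Bool.eq_not_self _).mp h2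
  simp [Nat.card_of_isEmpty]

lemma count_inv_odd (hg : 0 < g) {d : ℕ} (hd : 0 < d) (hdvd : d ∣ 2 * g)
    (hodd : Odd (2 * g / d)) :
    Nat.card {b : ZMod (2 * g) → Bool // IsBg g b ∧
      ∀ i, b (i + (d : ZMod (2 * g))) = b i} = 2 ^ (d / 2) := by
  haveI : NeZero (2 * g) := ⟨by omega⟩
  set m := 2 * g / d with hm_def
  have hdm : d * m = 2 * g := Nat.mul_div_cancel' hdvd
  obtain ⟨s, hms⟩ := hodd
  have hde : Even d := by
    rcases Nat.even_mul.mp (⟨g, by omega⟩ : Even (d * m)) with h | h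
    · exact h
    · exact absurd h (by simp [hms, Nat.even_add_one, parity_simps])
  obtain ⟨h0, hd2'⟩ := hde
  set h : ℕ := d / 2 with hh_def
  have hd2 : d = 2 * h := by omega
  have hh : 0 < h := by omega
  have e1 : 2 * g = 2 * (h + 2 * h * s) := by rw [← hdm, hms, hd2]; ring
  have hgs : g = h + d * s := by
    have e2 := Nat.eq_of_mul_eq_mul_left (show 0 < 2 by norm_num) e1
    rw [e2, hd2]
  have hhg : h < 2 * g := by omega
  -- the key anti-symmetry at h
  have K : ∀ b : ZMod (2 * g) → Bool, IsBg g b →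
      (∀ i, b (i + (d : ZMod (2 * g))) = b i) →
      ∀ i, b (i + (h : ZMod (2 * g))) = !(b i) := by
    intro b hbg hb i
    have hcast : (g : ZMod (2 * g)) = (h : ZMod (2 * g)) + ((d * s : ℕ) : ZMod (2 * g)) := by
      rw [hgs]; push_cast; ring
    calc b (i + (h : ZMod (2 * g)))
        = b ((i + (h : ZMod (2 * g))) + ((d * s : ℕ) : ZMod (2 * g))) := (inv_mul hb s _).symm
      _ = b (i + (g : ZMod (2 * g))) := by rw [hcast, add_assoc]
      _ = !(b i) := hbg i
  set T := {b : ZMod (2 * g) → Bool // IsBg g b ∧ ∀ i, b (i + (d : ZMod (2 * g))) = b i} with hT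
  let F : T → (Fin h → Bool) := fun b j => b.1 ((j : ℕ) : ZMod (2 * g))
  have hFbij : Function.Bijective F := by
    constructor
    · rintro ⟨b, hbg, hb⟩ ⟨b', hbg', hb'⟩ hFeq
      ext i
      have key := key_val hg hb i
      have key' := key_val hg hb' i
      have hr : i.val % d < d := Nat.mod_lt _ hd
      have hcc : ∀ r : ℕ, r < h → b ((r : ℕ) : ZMod (2 * g)) = b' ((r : ℕ) : ZMod (2 * g)) := by
        intro r hrh
        exact congrFun hFeq ⟨r, hrh⟩
      show b i = b' i
      rw [key, key']
      rcases lt_or_ge (i.val % d) h with hlt | hge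
      · exact hcc _ hlt
      · have hsplit : ((i.val % d : ℕ) : ZMod (2 * g))
            = ((i.val % d - h : ℕ) : ZMod (2 * g)) + (h : ZMod (2 * g)) := by
          rw [← Nat.cast_add, Nat.sub_add_cancel hge]
        rw [hsplit, K b hbg hb, K b' hbg' hb', hcc _ (by omega)]
    · intro c
      have hmodlt : ∀ r : ℕ, r % d < d := fun r => Nat.mod_lt _ hd
      set q : ℕ → Bool := fun r => if hlt : r % d < h then c ⟨r % d, hlt⟩
        else !c ⟨r % d - h, by have := hmodlt r; omega⟩ with hq_def
      have hq_mod : ∀ r : ℕ, q (r % d) = q r := by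
        intro r
        simp only [hq_def, Nat.mod_mod_of_dvd r (dvd_refl d)]
      have hq_d : ∀ r t : ℕ, q (r + d * t) = q r := by
        intro r t
        rw [← hq_mod (r + d * t), Nat.add_mul_mod_self_left, hq_mod]
      have hq_h : ∀ r : ℕ, q (r + h) = !q r := by
        intro r
        have h1 : r % d < d := hmodlt r
        rcases lt_or_ge (r % d) h with hlt | hge
        · have h2 : (r + h) % d = r % d + h := by
            rw [Nat.add_mod, Nat.mod_eq_of_lt (show h < d by omega),
              Nat.mod_eq_of_lt (show r % d + h < d by omega)]
          simp only [hq_def, h2]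
          rw [dif_neg (by omega), dif_pos hlt]
          exact congrArg (fun x => !c x) (Fin.ext (show r % d + h - h = r % d by omega))
        · have h2 : (r + h) % d = r % d - h := by
            rw [Nat.add_mod, Nat.mod_eq_of_lt (show h < d by omega),
              Nat.mod_eq_sub_mod (show d ≤ r % d + h by omega),
              show r % d + h - d = r % d - h from by omega,
              Nat.mod_eq_of_lt (show r % d - h < d by omega)]
          simp only [hq_def, h2]
          rw [dif_pos (by omega), dif_neg (by omega), Bool.not_not]
      refine ⟨⟨fun i => q i.val, ?_, ?_⟩, ?_⟩
      · -- IsBg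
        intro i
        show q ((i + (g : ZMod (2 * g))).val) = !q i.val
        have e3 : i.val + g = (i.val + h) + d * s := by
          rw [add_assoc]
          exact congrArg (fun x => i.val + x) hgs
        rw [← hq_mod ((i + (g : ZMod (2 * g))).val), val_add_natCast_mod hg hdvd,
          hq_mod (i.val + g), e3, hq_d, hq_h]
      · -- d-invariance
        intro i
        show q ((i + (d : ZMod (2 * g))).val) = q i.val
        rw [← hq_mod ((i + (d : ZMod (2 * g))).val), val_add_natCast_mod hg hdvd,
          Nat.add_mod_right, hq_mod]
      · -- F applied gives c back
        funext j
        show q (((j : ℕ) : ZMod (2 * g)).val) = c j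
        rw [ZMod.val_natCast_of_lt (by omega)]
        have hjd : (j : ℕ) % d = (j : ℕ) := Nat.mod_eq_of_lt (by omega)
        simp only [hq_def]
        rw [dif_pos (by omega : (j : ℕ) % d < h)]
        exact congrArg c (Fin.ext (by simpa using hjd))
  rw [Nat.card_eq_of_bijective F hFbij]
  simp [Nat.card_eq_fintype_card]

open Finset in
lemma sum_periods (hg : 0 < g) {d : ℕ} (hd : 0 < d) (hdvd : d ∣ 2 * g) :
    Nat.card {b : ZMod (2 * g) → Bool // IsBg g b ∧
        ∀ i, b (i + (d : ZMod (2 * g))) = b i}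
      = ∑ e ∈ d.divisors,
          Nat.card {b : ZMod (2 * g) → Bool // IsBg g b ∧ period g b = e} := by
  haveI : NeZero (2 * g) := ⟨by omega⟩
  classical
  have hcard : ∀ p : (ZMod (2 * g) → Bool) → Prop,
      Nat.card {b // p b} = (univ.filter p).card := fun p => by
    rw [Nat.card_eq_fintype_card, Fintype.card_subtype]
  simp only [hcard]
  rw [Finset.card_eq_sum_card_fiberwise
    (f := period g) (t := d.divisors)
    (fun b hb => by
      simp only [mem_coe, mem_filter] at hb
      exact Nat.mem_divisors.mpr ⟨(period_dvd_iff hg b d).mpr hb.2.2, hd.ne'⟩)]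
  apply Finset.sum_congr rfl
  intro e he
  refine congrArg Finset.card ?_
  ext b
  simp only [mem_filter, mem_univ, true_and]
  have hed : e ∣ d := (Nat.mem_divisors.mp he).1
  constructor
  · rintro ⟨⟨h1, _⟩, h3⟩; exact ⟨h1, h3⟩
  · rintro ⟨h1, h3⟩
    exact ⟨⟨h1, (period_dvd_iff hg b d).mp (h3 ▸ hed)⟩, h3⟩

theorem stmt5 (g k : ℕ) (hg : 0 < g) (hk : k ∣ 2 * g) (hodd : Odd (2 * g / k)) :
    (Nat.card {b : ZMod (2 * g) → Bool // IsBg g b ∧ period g b = k} : ℤ) =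
      ∑ x ∈ k.divisors.filter (fun x => Odd x),
        ArithmeticFunction.moebius x * 2 ^ (k / (2 * x)) := by
  classical
  have hk0 : 0 < k := by
    rcases Nat.eq_zero_or_pos k with h | h
    · subst h; simp at hk; omega
    · exact h
  have hFG : ∀ n > 0, n ∈ {x : ℕ | x ∣ 2 * g} →
      (∑ i ∈ n.divisors,
        ((Nat.card {b : ZMod (2 * g) → Bool // IsBg g b ∧ period g b = i} : ℕ) : ℤ))
      = (if Odd (2 * g / n) then 2 ^ (n / 2) else 0 : ℤ) := by
    intro n hn hnd
    have hsum := sum_periods hg hn hnd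
    have heq : (∑ i ∈ n.divisors,
        ((Nat.card {b : ZMod (2 * g) → Bool // IsBg g b ∧ period g b = i} : ℕ) : ℤ))
        = ((Nat.card {b : ZMod (2 * g) → Bool // IsBg g b ∧
            ∀ i, b (i + (n : ZMod (2 * g))) = b i} : ℕ) : ℤ) := by
      rw [hsum]; push_cast; rfl
    rw [heq]
    by_cases ho : Odd (2 * g / n)
    · rw [count_inv_odd hg hn hnd ho, if_pos ho]; push_cast; rfl
    · rw [count_inv_even hg hn hnd ho, if_neg ho]; rfl
  have hinv := (ArithmeticFunction.sum_eq_iff_sum_smul_moebius_eq_on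
    {x : ℕ | x ∣ 2 * g} (fun m n hmn hn => hmn.trans hn)).mp hFG k hk0 hk
  rw [Nat.sum_divisorsAntidiagonal (f := fun x y => (ArithmeticFunction.moebius x)
    • (if Odd (2 * g / y) then 2 ^ (y / 2) else 0 : ℤ))] at hinv
  have hterm : ∀ x ∈ k.divisors,
      (ArithmeticFunction.moebius x)
          • (if Odd (2 * g / (k / x)) then 2 ^ ((k / x) / 2) else 0 : ℤ)
        = if Odd x then (ArithmeticFunction.moebius x : ℤ) * 2 ^ (k / (2 * x)) else 0 := by
    intro x hx
    obtain ⟨hxk, -⟩ := Nat.mem_divisors.mp hx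
    have hx0 : 0 < x := Nat.pos_of_dvd_of_pos hxk hk0
    have hy0 : 0 < k / x := Nat.div_pos (Nat.le_of_dvd hk0 hxk) hx0
    have h1 : (k / x) * x = k := Nat.div_mul_cancel hxk
    have hmul : 2 * g = ((2 * g / k) * x) * (k / x) := by
      rw [mul_assoc, mul_comm x (k / x), h1, Nat.div_mul_cancel hk]
    have hq : 2 * g / (k / x) = (2 * g / k) * x := Nat.div_eq_of_eq_mul_left hy0 hmul
    have hhalf : (k / x) / 2 = k / (2 * x) := by
      rw [Nat.div_div_eq_div_mul, mul_comm]
    rw [hq, hhalf]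
    simp only [Nat.odd_mul]
    by_cases hox : Odd x
    · rw [if_pos ⟨hodd, hox⟩, if_pos hox, zsmul_eq_mul]
      simp [Int.cast_id]
    · rw [if_neg (fun h => hox h.2), if_neg hox, smul_zero]
  calc ((Nat.card {b : ZMod (2 * g) → Bool // IsBg g b ∧ period g b = k} : ℕ) : ℤ)
      = ∑ x ∈ k.divisors, (ArithmeticFunction.moebius x)
          • (if Odd (2 * g / (k / x)) then 2 ^ ((k / x) / 2) else 0 : ℤ) := hinv.symm
    _ = ∑ x ∈ k.divisors.filter (fun x => Odd x),
        ArithmeticFunction.moebius x * 2 ^ (k / (2 * x)) := by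
      rw [Finset.sum_filter]
      refine Finset.sum_congr rfl fun x hx => (hterm x hx).trans ?_
      by_cases hox : Odd x <;> simp [hox]
end

section
/- For every positive integer g, the number |E(g)| of orbits of the cyclic shift action of ZMod (2g) on B(g) satisfies 2g · |E(g)| = Σ_{d | g, d odd} φ(d) · 2^{g/d}, where φ denotes Euler's totient function. -/
/-- The orbit of `b` under the cyclic-shift action of `ZMod (2g)`. -/
def shiftOrbit (g : ℕ) (b : ZMod (2 * g) → Bool) : Set (ZMod (2 * g) → Bool) :=
  {c | ∃ s : ZMod (2 * g), c = fun i => b (i + s)}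


/-- iterated invariance -/
lemma shift_inv {n : ℕ} (b : ZMod n → Bool) (s : ZMod n)
    (hb : ∀ i, b (i + s) = b i) : ∀ (k : ℕ) (i : ZMod n), b (i + (k : ZMod n) * s) = b i := by
  intro k
  induction k with
  | zero => simp
  | succ k ih =>
    intro i
    have : ((k + 1 : ℕ) : ZMod n) * s = (k : ZMod n) * s + s := by push_cast; ring
    rw [this, ← add_assoc]
    rw [hb (i + (k : ZMod n) * s)]
    exact ih i

/-- iterated anti-invariance with parity -/
lemma shift_anti {n : ℕ} (b : ZMod n → Bool) (t : ZMod n)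
    (hb : ∀ i, b (i + t) = !b i) :
    ∀ (k : ℕ) (i : ZMod n), b (i + (k : ZMod n) * t) = ((decide (Odd k)).xor (b i)) := by
  intro k
  induction k with
  | zero => simp [Nat.odd_iff]
  | succ k ih =>
    intro i
    have : ((k + 1 : ℕ) : ZMod n) * t = (k : ZMod n) * t + t := by push_cast; ring
    rw [this, ← add_assoc, hb (i + (k : ZMod n) * t), ih i]
    have : decide (Odd (k+1)) = !decide (Odd k) := by
      rcases Nat.even_or_odd k with hk | hk
      · simp [Nat.odd_add_one, hk, Nat.not_odd_iff_even]
      · simp [Nat.odd_add_one, hk]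
    rw [this]
    cases decide (Odd k) <;> cases b i <;> rfl

/-- invariance under s implies invariance under gcd -/
lemma shift_inv_gcd {n : ℕ} [NeZero n] (b : ZMod n → Bool) (s : ZMod n)
    (hb : ∀ i, b (i + s) = b i) (i : ZMod n) :
    b (i + ((Nat.gcd n s.val : ℕ) : ZMod n)) = b i := by
  set m := Nat.gcd n s.val with hm
  have bez : (m : ℤ) = n * Nat.gcdA n s.val + s.val * Nat.gcdB n s.val := Nat.gcd_eq_gcd_ab n s.val
  have hcast : ((m : ℕ) : ZMod n) = s * ((Nat.gcdB n s.val : ℤ) : ZMod n) := by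
    have := congrArg (fun z : ℤ => (z : ZMod n)) bez
    push_cast at this
    rw [ZMod.natCast_val, ZMod.cast_id] at this
    simpa using this
  set c : ZMod n := ((Nat.gcdB n s.val : ℤ) : ZMod n) with hc
  have hc2 : c = ((c.val : ℕ) : ZMod n) := by rw [ZMod.natCast_val, ZMod.cast_id]
  rw [hcast, hc2, mul_comm]
  exact shift_inv b s hb c.val i

lemma countAnti (g h : ℕ) (hg : 0 < g) (hh : 0 < h) (hdvd : h ∣ g) :
    Nat.card {b : ZMod (2*g) → Bool // ∀ i, b (i + (h : ZMod (2*g))) = !b i} = 2 ^ h := by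
  haveI : NeZero (2*g) := ⟨by omega⟩
  obtain ⟨t, ht⟩ := hdvd
  have hlt : h < 2*g := by nlinarith [Nat.le_of_dvd hg ⟨t, ht⟩]
  have hvalh : ((h : ZMod (2*g)).val) = h := ZMod.val_cast_of_lt hlt
  have ht1 : 1 ≤ t := by nlinarith
  -- the equivalence
  have E : {b : ZMod (2*g) → Bool // ∀ i, b (i + (h : ZMod (2*g))) = !b i} ≃ (Fin h → Bool) := by
    refine
      { toFun := fun b => fun j => b.1 ((j : ℕ) : ZMod (2*g))
        invFun := fun f => ⟨fun i => (decide (Odd (i.val / h))).xor (f ⟨i.val % h, Nat.mod_lt _ hh⟩), ?_⟩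
        left_inv := ?_
        right_inv := ?_ }
    · intro i
      have hivlt : i.val < 2*g := i.val_lt
      have hJ : (i + (h : ZMod (2*g))).val = (i.val + h) % (2*g) := by
        rw [ZMod.val_add, hvalh]
      set J := (i.val + h) % (2*g) with hJdef
      have hmodeq : J % h = i.val % h ∧ (Odd (J / h) ↔ ¬ Odd (i.val / h)) := by
        by_cases hcase : i.val + h < 2*g
        · have : J = i.val + h := Nat.mod_eq_of_lt hcase
          rw [this]
          constructor
          · exact Nat.add_mod_right _ _
          · rw [Nat.add_div_right _ hh, Nat.odd_add_one]
        · have hJeq : J = i.val + h - (2*g) := by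
            rw [hJdef, Nat.mod_eq_sub_mod (by omega), Nat.mod_eq_of_lt (by omega)]
          have hsum : J + 2*g = i.val + h := by omega
          have h2g : 2*g = h * (2*t) := by rw [ht]; ring
          have hmod : J % h = i.val % h := by
            have : (J + h * (2*t)) % h = J % h := Nat.add_mul_mod_self_left J h (2*t)
            rw [← h2g, hsum] at this
            rw [← this, Nat.add_mod_right]
          have hdiv : J / h + 2*t = i.val / h + 1 := by
            have h1 : (J + h * (2*t)) / h = J / h + 2*t := Nat.add_mul_div_left J (2*t) hh
            rw [← h2g, hsum] at h1
            rw [← h1, Nat.add_div_right _ hh]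
          refine ⟨hmod, ?_⟩
          rw [Nat.odd_iff, Nat.odd_iff]
          omega
      have e1 : decide (Odd (J / h)) = !decide (Odd (i.val / h)) := by
        rcases Nat.even_or_odd (i.val / h) with hk | hk
        · simp [hmodeq.2, hk, Nat.not_odd_iff_even]
        · simp [hmodeq.2, hk]
      have e2 : (⟨J % h, Nat.mod_lt _ hh⟩ : Fin h) = ⟨i.val % h, Nat.mod_lt _ hh⟩ :=
        Fin.ext hmodeq.1
      simp only
      rw [hJ, e1, e2]
      cases decide (Odd (i.val / h)) <;> cases f ⟨i.val % h, Nat.mod_lt _ hh⟩ <;> rfl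
    · rintro ⟨b, hb⟩
      ext i
      simp only
      -- claim : b i = xor (decide (Odd (i.val/h))) (b ((i.val % h : ℕ) : ZMod (2*g)))
      have key : ∀ (r k : ℕ), b ((r + k * h : ℕ) : ZMod (2*g)) =
          (decide (Odd k)).xor (b ((r : ℕ) : ZMod (2*g))) := by
        intro r k
        have := shift_anti b (h : ZMod (2*g)) hb k ((r : ℕ) : ZMod (2*g))
        rw [← this]
        congr 1
        push_cast
        ring
      have := key (i.val % h) (i.val / h)
      rw [Nat.mod_add_div', ZMod.natCast_val, ZMod.cast_id] at this
      exact this.symm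
    · intro f
      funext j
      simp only
      have hjlt : (j : ℕ) < 2*g := lt_trans j.isLt hlt
      have hval : (((j : ℕ) : ZMod (2*g))).val = (j : ℕ) := ZMod.val_cast_of_lt hjlt
      rw [hval]
      have h1 : (j : ℕ) / h = 0 := Nat.div_eq_of_lt j.isLt
      have h2 : (j : ℕ) % h = (j : ℕ) := Nat.mod_eq_of_lt j.isLt
      simp [h1, h2, Nat.odd_iff]
  rw [Nat.card_congr E]
  simp

abbrev BgT (g : ℕ) := {b : ZMod (2 * g) → Bool // IsBg g b}

instance bgAction (g : ℕ) : AddAction (ZMod (2 * g)) (BgT g) where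
  vadd s b := ⟨fun i => b.1 (i + s), fun i => by
    have := b.2 (i + s)
    simpa [add_right_comm] using this⟩
  zero_vadd b := Subtype.ext (funext fun i => by
    show b.1 (i + 0) = b.1 i
    rw [add_zero])
  add_vadd s t b := Subtype.ext (funext fun i => by
    show b.1 (i + (s + t)) = b.1 (i + s + t)
    rw [add_assoc])

lemma vadd_def (g : ℕ) (s : ZMod (2*g)) (b : BgT g) :
    (s +ᵥ b : BgT g).1 = fun i => b.1 (i + s) := rfl

/-- characterization of fixed points when the order is odd -/
lemma fixedBy_card (g : ℕ) (hg : 0 < g) (s : ZMod (2*g)) :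
    Nat.card (AddAction.fixedBy (BgT g) s) =
      if Odd (addOrderOf s) then 2 ^ (g / addOrderOf s) else 0 := by
  haveI : NeZero (2*g) := ⟨by omega⟩
  set m := Nat.gcd (2*g) s.val with hm
  have hsv : s = ((s.val : ℕ) : ZMod (2*g)) := by rw [ZMod.natCast_val, ZMod.cast_id]
  have hord : addOrderOf s = (2*g) / m := by
    conv_lhs => rw [hsv]
    rw [ZMod.addOrderOf_coe _ (by omega)]
  have hmdvd : m ∣ 2*g := Nat.gcd_dvd_left _ _
  have hmpos : 0 < m := Nat.gcd_pos_of_pos_left _ (by omega)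
  set d := (2*g) / m with hd
  have hnm : m * d = 2*g := Nat.mul_div_cancel' hmdvd
  have hdpos : 0 < d := Nat.div_pos (Nat.le_of_dvd (by omega) hmdvd) hmpos
  rw [hord]
  by_cases hodd : Odd d
  · simp only [hodd, if_true]
    -- m even, h := m/2 = g/d
    have hmeven : 2 ∣ m := by
      have h2 : (2:ℕ) ∣ m * d := ⟨g, by omega⟩
      exact ((Nat.coprime_two_left.mpr hodd)).dvd_of_dvd_mul_right h2
    obtain ⟨h, hh2⟩ := hmeven
    have hhd : h * d = g := by
      have e : 2*(h*d) = 2*g := by rw [← hnm, hh2]; ring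
      omega
    have hhpos : 0 < h := by
      rcases Nat.eq_zero_or_pos h with h0 | h0
      · omega
      · exact h0
    have hgd : g / d = h := by rw [← hhd, Nat.mul_div_cancel _ hdpos]
    have hmem : ∀ x : BgT g, (s +ᵥ x = x) ↔ ∀ i, x.1 (i + s) = x.1 i := by
      intro x
      rw [Subtype.ext_iff, vadd_def, funext_iff]
    have pred_iff : ∀ b : ZMod (2*g) → Bool,
        (IsBg g b ∧ ∀ i, b (i + s) = b i) ↔ (∀ i, b (i + (h : ZMod (2*g))) = !b i) := by
      intro b
      constructor
      · rintro ⟨hB, hinv⟩ i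
        have hmult := shift_inv b ((m : ℕ) : ZMod (2*g)) (shift_inv_gcd b s hinv)
        have hnat : h + (d/2) * m = g := by
          rcases hodd with ⟨e, he⟩
          have hde : d/2 = e := by omega
          rw [hde, hh2, ← hhd, he]; ring
        have key : (i + (h : ZMod (2*g))) + ((d/2 : ℕ) : ZMod (2*g)) * ((m : ℕ) : ZMod (2*g))
            = i + ((g : ℕ) : ZMod (2*g)) := by
          rw [add_assoc]
          congr 1
          rw [← Nat.cast_mul, ← Nat.cast_add, hnat]
        calc b (i + (h : ZMod (2*g)))
            = b ((i + (h : ZMod (2*g))) + ((d/2 : ℕ) : ZMod (2*g)) * ((m : ℕ) : ZMod (2*g))) :=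
              (hmult (d/2) _).symm
          _ = b (i + ((g : ℕ) : ZMod (2*g))) := by rw [key]
          _ = !b i := hB i
      · intro hanti
        constructor
        · intro i
          have := shift_anti b ((h : ℕ) : ZMod (2*g)) hanti d i
          have hcast : ((d : ℕ) : ZMod (2*g)) * ((h : ℕ) : ZMod (2*g)) = ((g : ℕ) : ZMod (2*g)) := by
            rw [← Nat.cast_mul, mul_comm d h, hhd]
          rw [hcast] at this
          rw [this]
          simp [hodd]
        · intro i
          obtain ⟨c, hc⟩ : m ∣ s.val := Nat.gcd_dvd_right _ _
          have hsc : s = ((2*c : ℕ) : ZMod (2*g)) * ((h : ℕ) : ZMod (2*g)) := by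
            conv_lhs => rw [hsv]
            rw [← Nat.cast_mul]
            congr 1
            rw [hc, hh2]; ring
          rw [hsc]
          rw [shift_anti b ((h : ℕ) : ZMod (2*g)) hanti (2*c) i]
          simp [Nat.odd_iff]
    have E : (AddAction.fixedBy (BgT g) s) ≃
        {b : ZMod (2*g) → Bool // ∀ i, b (i + (h : ZMod (2*g))) = !b i} :=
      { toFun := fun x => ⟨x.1.1, (pred_iff x.1.1).mp ⟨x.1.2, (hmem x.1).mp x.2⟩⟩
        invFun := fun y => ⟨⟨y.1, ((pred_iff y.1).mpr y.2).1⟩, (hmem _).mpr ((pred_iff y.1).mpr y.2).2⟩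
        left_inv := fun x => Subtype.ext (Subtype.ext rfl)
        right_inv := fun y => rfl }
    rw [Nat.card_congr E, countAnti g h hg hhpos ⟨d, hhd.symm⟩, hgd]
  · simp only [hodd, if_false]
    have hdeven : 2 ∣ d := (Nat.not_odd_iff_even.mp hodd).two_dvd
    obtain ⟨e, hde⟩ := hdeven
    have hme : m * e = g := by
      have h2 : 2*(m*e) = 2*g := by rw [← hnm, hde]; ring
      omega
    have hmem : ∀ x : BgT g, (s +ᵥ x = x) ↔ ∀ i, x.1 (i + s) = x.1 i := by
      intro x
      rw [Subtype.ext_iff, vadd_def, funext_iff]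
    have : IsEmpty (AddAction.fixedBy (BgT g) s) := by
      constructor
      rintro ⟨⟨b, hB⟩, hfix⟩
      have hinv : ∀ i, b (i + s) = b i := (hmem ⟨b, hB⟩).mp hfix
      have h1 := shift_inv b ((m : ℕ) : ZMod (2*g)) (shift_inv_gcd b s hinv) e 0
      have hcast : ((e : ℕ) : ZMod (2*g)) * ((m : ℕ) : ZMod (2*g)) = ((g : ℕ) : ZMod (2*g)) := by
        rw [← Nat.cast_mul, mul_comm e m, hme]
      rw [hcast] at h1
      have h2 := hB 0
      rw [h1] at h2
      exact (Bool.eq_not_self _).mp h2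
    exact Nat.card_of_isEmpty

lemma shiftOrbit_vadd (g : ℕ) (s : ZMod (2*g)) (b : ZMod (2*g) → Bool) :
    shiftOrbit g (fun i => b (i + s)) = shiftOrbit g b := by
  ext c
  constructor
  · rintro ⟨t, rfl⟩
    exact ⟨t + s, by funext i; simp only; rw [add_assoc]⟩
  · rintro ⟨u, rfl⟩
    refine ⟨u - s, ?_⟩
    funext i
    simp only
    congr 1
    ring

theorem stmt7 (g : ℕ) (hg : 0 < g) :
    2 * g * Nat.card {S : Set (ZMod (2 * g) → Bool) |
        ∃ b : ZMod (2 * g) → Bool, IsBg g b ∧ S = shiftOrbit g b} =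
      ∑ d ∈ g.divisors.filter (fun d => Odd d), Nat.totient d * 2 ^ (g / d) := by
  classical
  haveI : NeZero (2*g) := ⟨by omega⟩
  haveI : Fintype (BgT g) := Fintype.ofFinite _
  haveI : ∀ a : ZMod (2*g), Fintype (AddAction.fixedBy (BgT g) a) := fun a => Fintype.ofFinite _
  haveI : Fintype (Quotient (AddAction.orbitRel (ZMod (2*g)) (BgT g))) := Fintype.ofFinite _
  have hB := AddAction.sum_card_fixedBy_eq_card_orbits_mul_card_addGroup (ZMod (2*g)) (BgT g)
  -- step 1 : the orbit-set bijection
  have hwd : ∀ (x y : BgT g), AddAction.orbitRel (ZMod (2*g)) (BgT g) x y →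
      (⟨shiftOrbit g x.1, ⟨x.1, x.2, rfl⟩⟩ :
        {S : Set (ZMod (2 * g) → Bool) // ∃ b, IsBg g b ∧ S = shiftOrbit g b}) =
      ⟨shiftOrbit g y.1, ⟨y.1, y.2, rfl⟩⟩ := by
    intro x y hxy
    rw [AddAction.orbitRel_apply] at hxy
    obtain ⟨t, ht⟩ := AddAction.mem_orbit_iff.mp hxy
    apply Subtype.ext
    show shiftOrbit g x.1 = shiftOrbit g y.1
    rw [← ht, vadd_def, shiftOrbit_vadd]
  set Φ : Quotient (AddAction.orbitRel (ZMod (2*g)) (BgT g)) →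
      {S : Set (ZMod (2 * g) → Bool) // ∃ b, IsBg g b ∧ S = shiftOrbit g b} :=
    Quotient.lift (fun x : BgT g =>
      (⟨shiftOrbit g x.1, ⟨x.1, x.2, rfl⟩⟩ :
        {S : Set (ZMod (2 * g) → Bool) // ∃ b, IsBg g b ∧ S = shiftOrbit g b})) hwd with hΦ
  have hbij : Function.Bijective Φ := by
    constructor
    · intro x y
      induction x using Quotient.inductionOn with | h a =>
      induction y using Quotient.inductionOn with | h b =>
      intro hxy
      have heq : shiftOrbit g a.1 = shiftOrbit g b.1 := by
        have := Subtype.ext_iff.mp hxy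
        simpa [hΦ] using this
      have hamem : a.1 ∈ shiftOrbit g a.1 := ⟨0, by funext i; rw [add_zero]⟩
      rw [heq] at hamem
      obtain ⟨t, ht⟩ := hamem
      apply Quotient.sound
      show (AddAction.orbitRel (ZMod (2*g)) (BgT g)) a b
      rw [AddAction.orbitRel_apply]
      refine AddAction.mem_orbit_iff.mpr ⟨t, ?_⟩
      apply Subtype.ext
      rw [vadd_def]
      exact ht.symm
    · rintro ⟨S, b, hb, rfl⟩
      exact ⟨Quotient.mk _ ⟨b, hb⟩, rfl⟩
  have hcard1 : Nat.card {S : Set (ZMod (2 * g) → Bool) |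
      ∃ b : ZMod (2 * g) → Bool, IsBg g b ∧ S = shiftOrbit g b} =
      Fintype.card (Quotient (AddAction.orbitRel (ZMod (2*g)) (BgT g))) := by
    rw [← Nat.card_eq_fintype_card]
    exact (Nat.card_congr (Equiv.ofBijective Φ hbij)).symm
  -- step 2 : the sum of fixed points
  have hsum : (∑ s : ZMod (2*g), Fintype.card (AddAction.fixedBy (BgT g) s)) =
      ∑ d ∈ g.divisors.filter (fun d => Odd d), Nat.totient d * 2 ^ (g / d) := by
    have step1 : (∑ s : ZMod (2*g), Fintype.card (AddAction.fixedBy (BgT g) s)) =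
        ∑ s : ZMod (2*g), (if Odd (addOrderOf s) then 2 ^ (g / addOrderOf s) else 0) := by
      refine Finset.sum_congr rfl fun s _ => ?_
      rw [← Nat.card_eq_fintype_card, fixedBy_card g hg s]
    rw [step1]
    have hmaps : ∀ s : ZMod (2*g), s ∈ Finset.univ → addOrderOf s ∈ (2*g).divisors := by
      intro s _
      rw [Nat.mem_divisors]
      refine ⟨?_, by omega⟩
      have := addOrderOf_dvd_card (x := s)
      rwa [ZMod.card] at this
    rw [← Finset.sum_fiberwise_of_maps_to hmaps
      (fun s => if Odd (addOrderOf s) then 2 ^ (g / addOrderOf s) else 0)]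
    have step2 : ∀ d ∈ (2*g).divisors,
        (∑ s ∈ Finset.univ.filter (fun s : ZMod (2*g) => addOrderOf s = d),
          (if Odd (addOrderOf s) then 2 ^ (g / addOrderOf s) else 0)) =
        Nat.totient d * (if Odd d then 2 ^ (g / d) else 0) := by
      intro d hd
      rw [Finset.sum_congr rfl (fun s hs => by rw [(Finset.mem_filter.mp hs).2]),
        Finset.sum_const, smul_eq_mul]
      congr 1
      have hdvd : d ∣ Fintype.card (ZMod (2*g)) := by
        rw [ZMod.card]; exact (Nat.mem_divisors.mp hd).1
      exact IsAddCyclic.card_addOrderOf_eq_totient hdvd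
    rw [Finset.sum_congr rfl step2]
    simp only [mul_ite, mul_zero]
    rw [← Finset.sum_filter]
    congr 1
    ext d
    simp only [Finset.mem_filter, Nat.mem_divisors]
    constructor
    · rintro ⟨⟨hdvd, _⟩, hodd⟩
      exact ⟨⟨(Nat.coprime_two_right.mpr hodd).dvd_of_dvd_mul_left hdvd, by omega⟩, hodd⟩
    · rintro ⟨⟨hdvd, _⟩, hodd⟩
      exact ⟨⟨hdvd.mul_left 2, by omega⟩, hodd⟩
  rw [hcard1, ← hsum, hB, ZMod.card]
  ring
end

section
/- For every positive integer g, the number |E'(g)| of orbits of the cyclic shift action of ZMod (2g) on the set of elements of B(g) whose period is exactly 2g satisfies 2g · |E'(g)| = Σ_{x | g, x odd} μ(x) · 2^{g/x}, where μ denotes the Möbius function. -/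
namespace Stmt8Aux

variable {g : ℕ}

/-- `b` is periodic with period `k`. -/
def Works (g : ℕ) (b : ZMod (2 * g) → Bool) (k : ℕ) : Prop :=
  ∀ i : ZMod (2 * g), b (i + (k : ZMod (2 * g))) = b i

/-- `b` is antiperiodic with antiperiod `d`. -/
def AWorks (g : ℕ) (b : ZMod (2 * g) → Bool) (d : ℕ) : Prop :=
  ∀ i : ZMod (2 * g), b (i + (d : ZMod (2 * g))) = !(b i)

lemma works_add {b : ZMod (2 * g) → Bool} {k l : ℕ} (hk : Works g b k) (hl : Works g b l) :
    Works g b (k + l) := by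
  intro i
  have h : ((k + l : ℕ) : ZMod (2 * g)) = (k : ZMod (2 * g)) + (l : ZMod (2 * g)) := by push_cast; ring
  rw [h, ← add_assoc, hl (i + k), hk i]

lemma works_mul {b : ZMod (2 * g) → Bool} {k : ℕ} (hk : Works g b k) (q : ℕ) :
    Works g b (k * q) := by
  induction q with
  | zero => intro i; simp
  | succ n ih =>
      have : k * (n + 1) = k * n + k := by ring
      rw [this]; exact works_add ih hk

lemma works_two_g (b : ZMod (2 * g) → Bool) : Works g b (2 * g) := by
  intro i; simp [ZMod.natCast_self]

lemma period_mem (hg : 0 < g) (b : ZMod (2 * g) → Bool) :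
    0 < period g b ∧ Works g b (period g b) := by
  have h : {k : ℕ | 0 < k ∧ ∀ i : ZMod (2 * g), b (i + (k : ZMod (2 * g))) = b i}.Nonempty :=
    ⟨2 * g, by omega, works_two_g b⟩
  exact Nat.sInf_mem h

lemma period_pos (hg : 0 < g) (b : ZMod (2 * g) → Bool) : 0 < period g b :=
  (period_mem hg b).1

lemma works_period (hg : 0 < g) (b : ZMod (2 * g) → Bool) : Works g b (period g b) :=
  (period_mem hg b).2

lemma period_le (hg : 0 < g) (b : ZMod (2 * g) → Bool) : period g b ≤ 2 * g :=
  Nat.sInf_le ⟨by omega, works_two_g b⟩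

lemma period_dvd (hg : 0 < g) {b : ZMod (2 * g) → Bool} {k : ℕ} (hk : Works g b k) :
    period g b ∣ k := by
  set p := period g b with hp
  have hpw : Works g b p := works_period hg b
  have hrw : Works g b (k % p) := by
    intro i
    have h1 := works_mul hpw (k / p) (i + ((k % p : ℕ) : ZMod (2 * g)))
    have e : k % p + p * (k / p) = k := Nat.mod_add_div k p
    have h2 : (i + ((k % p : ℕ) : ZMod (2 * g))) + ((p * (k / p) : ℕ) : ZMod (2 * g))
        = i + ((k : ℕ) : ZMod (2 * g)) := by
      rw [add_assoc, ← Nat.cast_add, e]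
    rw [h2] at h1
    rw [← h1]; exact hk i
  rcases Nat.eq_zero_or_pos (k % p) with h | h
  · exact Nat.dvd_of_mod_eq_zero h
  · exfalso
    have hle : p ≤ k % p := Nat.sInf_le ⟨h, hrw⟩
    have : k % p < p := Nat.mod_lt _ (period_pos hg b)
    omega

lemma dvd_works (hg : 0 < g) {b : ZMod (2 * g) → Bool} {k : ℕ} (h : period g b ∣ k) :
    Works g b k := by
  obtain ⟨q, rfl⟩ := h
  exact works_mul (works_period hg b) q


lemma aworks_mul {b : ZMod (2 * g) → Bool} {d : ℕ} (h : AWorks g b d) (q : ℕ)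
    (i : ZMod (2 * g)) :
    b (i + ((d * q : ℕ) : ZMod (2 * g))) = xor (decide (q % 2 = 1)) (b i) := by
  induction q with
  | zero => simp
  | succ n ih =>
      have e : d * (n + 1) = d * n + d := by ring
      have h2 : (i + ((d * (n+1) : ℕ) : ZMod (2 * g)))
          = (i + ((d * n : ℕ) : ZMod (2 * g))) + ((d : ℕ) : ZMod (2 * g)) := by
        rw [e]; push_cast; ring
      rw [h2, h _, ih]
      rcases Nat.even_or_odd n with he | ho
      · have h1 : n % 2 = 0 := Nat.even_iff.mp he
        have h2 : (n + 1) % 2 = 1 := by omega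
        simp [h1, h2]
      · have h1 : n % 2 = 1 := Nat.odd_iff.mp ho
        have h2 : (n + 1) % 2 = 0 := by omega
        simp [h1, h2]

lemma aworks_mul_odd {b : ZMod (2 * g) → Bool} {d q : ℕ} (h : AWorks g b d) (hq : Odd q) :
    AWorks g b (d * q) := by
  intro i
  rw [aworks_mul h q i, Nat.odd_iff.mp hq]
  simp

lemma aworks_mul_even {b : ZMod (2 * g) → Bool} {d q : ℕ} (h : AWorks g b d) (hq : Even q) :
    Works g b (d * q) := by
  intro i
  rw [aworks_mul h q i, Nat.even_iff.mp hq]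
  simp

lemma aworks_two {b : ZMod (2 * g) → Bool} {d : ℕ} (h : AWorks g b d) :
    Works g b (2 * d) := by
  have := aworks_mul_even h (q := 2) (by decide)
  rwa [mul_comm] at this

lemma aworks_of_add {b : ZMod (2 * g) → Bool} {d k : ℕ}
    (h : AWorks g b (d + k)) (hk : Works g b k) : AWorks g b d := by
  intro i
  have h1 : (i + ((d : ℕ) : ZMod (2 * g))) + ((k : ℕ) : ZMod (2 * g))
      = i + (((d + k : ℕ)) : ZMod (2 * g)) := by push_cast; ring
  have := hk (i + ((d : ℕ) : ZMod (2 * g)))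
  rw [h1] at this
  rw [← this, h i]

lemma isBg_aworks {b : ZMod (2 * g) → Bool} (h : IsBg g b) : AWorks g b g := h

/-- the period of an element of `B g` is `2 e` with `e ∣ g` and `g / e` odd. -/
lemma period_shape (hg : 0 < g) {b : ZMod (2 * g) → Bool} (hb : IsBg g b) :
    ∃ e : ℕ, 0 < e ∧ e ∣ g ∧ Odd (g / e) ∧ period g b = 2 * e := by
  set p := period g b with hp
  have hpg : p ∣ 2 * g := period_dvd hg (works_two_g b)
  have hng : ¬ p ∣ g := by
    intro hdvd
    have := dvd_works hg hdvd 0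
    rw [hb 0] at this
    simp at this
  have hpeven : 2 ∣ p := by
    by_contra hodd
    have hcop : Nat.Coprime p 2 := (Nat.coprime_two_right).mpr (Nat.odd_iff.mpr (by omega))
    exact hng (hcop.dvd_of_dvd_mul_left hpg)
  obtain ⟨e, hpe⟩ := hpeven
  rw [hpe] at hpg hng ⊢
  refine ⟨e, ?_, ?_, ?_, rfl⟩
  · have := period_pos hg b; omega
  · exact (mul_dvd_mul_iff_left (two_ne_zero)).mp hpg
  · have hedvd : e ∣ g := (mul_dvd_mul_iff_left (two_ne_zero)).mp hpg
    rcases Nat.even_or_odd (g / e) with he | ho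
    · exfalso
      obtain ⟨m, hm⟩ := he
      apply hng
      refine ⟨m, ?_⟩
      have hge : e * (g / e) = g := Nat.mul_div_cancel' hedvd
      rw [← hge, hm]; ring
    · exact ho


/-- the model antiperiodic function on `ℕ`. -/
def FF (d : ℕ) (c : ℕ → Bool) (a : ℕ) : Bool :=
  xor (decide ((a / d) % 2 = 1)) (c (a % d))

lemma FF_add_d {d : ℕ} (hd : 0 < d) (c : ℕ → Bool) (a : ℕ) :
    FF d c (a + d) = ! FF d c a := by
  unfold FF
  rw [Nat.add_mod_right, Nat.add_div_right _ hd]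
  rcases Nat.even_or_odd (a / d) with he | ho
  · have h1 : a / d % 2 = 0 := Nat.even_iff.mp he
    have h2 : (a / d + 1) % 2 = 1 := by omega
    simp [h1, h2]
  · have h1 : a / d % 2 = 1 := Nat.odd_iff.mp ho
    have h2 : (a / d + 1) % 2 = 0 := by omega
    simp [h1, h2]

lemma FF_add_mul {d : ℕ} (hd : 0 < d) (c : ℕ → Bool) (a m : ℕ) (hm : m % 2 = 0) :
    FF d c (a + d * m) = FF d c a := by
  unfold FF
  rw [Nat.add_mul_mod_self_left, Nat.add_mul_div_left _ _ hd]
  have h : (a / d + m) % 2 = a / d % 2 := by omega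
  rw [h]

lemma FF_add_n {d n : ℕ} (hd : 0 < d) (hdvd : d ∣ n) (heven : n / d % 2 = 0)
    (c : ℕ → Bool) (a q : ℕ) : FF d c (a + n * q) = FF d c a := by
  have h1 : n / d * q % 2 = 0 := by rw [Nat.mul_mod, heven]; simp
  have h2 : a + n * q = a + d * (n / d * q) := by
    rw [← mul_assoc, Nat.mul_div_cancel' hdvd]
  rw [h2, FF_add_mul hd _ _ _ h1]

lemma FF_mod {d n : ℕ} (hd : 0 < d) (hdvd : d ∣ n) (heven : n / d % 2 = 0)
    (c : ℕ → Bool) (a : ℕ) : FF d c (a % n) = FF d c a := by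
  conv_rhs => rw [← Nat.mod_add_div a n]
  rw [FF_add_n hd hdvd heven]

lemma card_aworks (hg : 0 < g) {d : ℕ} (hd : 0 < d) (hdg : d ∣ g) :
    Nat.card {b : ZMod (2 * g) → Bool // AWorks g b d} = 2 ^ d := by
  haveI : NeZero (2 * g) := ⟨by omega⟩
  have hdN : d < 2 * g := by
    have := Nat.le_of_dvd hg hdg; omega
  have hdd : d ∣ 2 * g := Dvd.dvd.mul_left hdg 2
  have heven : 2 * g / d % 2 = 0 := by
    rw [Nat.mul_div_assoc 2 hdg, Nat.mul_mod_right]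
  have e : {b : ZMod (2 * g) → Bool // AWorks g b d} ≃ (Fin d → Bool) := by
    refine
      { toFun := fun b => fun j => b.1 ((j.val : ℕ) : ZMod (2 * g))
        invFun := fun c =>
          ⟨fun x => FF d (fun a => c ⟨a % d, Nat.mod_lt a hd⟩) x.val, ?_⟩
        left_inv := ?_
        right_inv := ?_ }
    · intro i
      have hv : (i + ((d : ℕ) : ZMod (2 * g))).val = (i.val + d) % (2 * g) := by
        rw [ZMod.val_add, ZMod.val_cast_of_lt hdN]
      simp only [hv]
      rw [FF_mod hd hdd heven, FF_add_d hd]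
    · intro b
      apply Subtype.ext
      funext x
      have hx : x = ((x.val % d : ℕ) : ZMod (2 * g)) + ((d * (x.val / d) : ℕ) : ZMod (2 * g)) := by
        rw [← Nat.cast_add, Nat.mod_add_div]
        exact (ZMod.natCast_rightInverse x).symm
      conv_rhs => rw [hx, aworks_mul b.2]
      simp only [FF, Nat.mod_mod_of_dvd _ (dvd_refl d)]
    · intro c
      funext j
      have hv : ((j.val : ℕ) : ZMod (2 * g)).val = j.val :=
        ZMod.val_cast_of_lt (j.isLt.trans hdN)
      show FF d (fun a => c ⟨a % d, Nat.mod_lt a hd⟩) ((j.val : ℕ) : ZMod (2 * g)).val = c j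
      rw [hv]
      simp only [FF]
      simp [Nat.mod_eq_of_lt j.isLt, Nat.div_eq_of_lt j.isLt]
  rw [Nat.card_congr e]
  simp [Nat.card_eq_fintype_card]


lemma aworks_isBg (hg : 0 < g) {d : ℕ} (hdg : d ∣ g) (hodd : Odd (g / d))
    {b : ZMod (2 * g) → Bool} (hb : AWorks g b d) : IsBg g b := by
  have := aworks_mul_odd hb hodd
  rwa [Nat.mul_div_cancel' hdg] at this

lemma div_div_eq {e d gg : ℕ} (hepos : 0 < e) (he : e ∣ d) (hdg : d ∣ gg) :
    ∃ k, gg = d * k ∧ gg / e = d / e * k := by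
  obtain ⟨k, hk⟩ := hdg
  refine ⟨k, hk, ?_⟩
  have h3 : d = e * (d / e) := (Nat.mul_div_cancel' he).symm
  rw [hk]
  conv_lhs => rw [h3]
  rw [mul_assoc, Nat.mul_div_cancel_left _ hepos]

lemma odd_div_of_dvd {e d gg : ℕ} (hepos : 0 < e) (he : e ∣ d) (hdg : d ∣ gg)
    (hodd : Odd (gg / e)) : Odd (d / e) := by
  obtain ⟨k, hk, h2⟩ := div_div_eq hepos he hdg
  rw [h2] at hodd
  exact (Nat.odd_mul.mp hodd).1

lemma fiber_iff (hg : 0 < g) {d e : ℕ} (hd : 0 < d) (hdg : d ∣ g) (hodd : Odd (g / d))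
    (he : e ∣ d) (heodd : Odd (d / e)) (b : ZMod (2 * g) → Bool) :
    (AWorks g b d ∧ period g b / 2 = e) ↔ IsBg g b ∧ period g b = 2 * e := by
  have hepos : 0 < e := by
    rcases Nat.eq_zero_or_pos e with h | h
    · subst h; simp [Nat.odd_iff] at heodd
    · exact h
  have hedvdg : e ∣ g := he.trans hdg
  have hgeodd : Odd (g / e) := by
    obtain ⟨k, hk, h2⟩ := div_div_eq hepos he hdg
    have hkodd : Odd k := by
      have h4 := hodd
      rw [hk, Nat.mul_div_cancel_left k hd] at h4
      exact h4
    rw [h2]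
    exact heodd.mul hkodd
  constructor
  · rintro ⟨hA, hper⟩
    have hBg := aworks_isBg hg hdg hodd hA
    obtain ⟨e', he'pos, he'g, he'odd, hpe⟩ := period_shape hg hBg
    exact ⟨hBg, by omega⟩
  · rintro ⟨hBg, hper⟩
    refine ⟨?_, by omega⟩
    have hAe : AWorks g b e := by
      obtain ⟨t, ht⟩ := hgeodd
      have hge : g = e + 2 * (e * t) := by
        have h5 : e * (g / e) = g := Nat.mul_div_cancel' hedvdg
        rw [← h5, ht]; ring
      have hw : Works g b (2 * (e * t)) := by
        apply dvd_works hg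
        rw [hper]; exact ⟨t, by ring⟩
      have hA : AWorks g b (e + 2 * (e * t)) := by rw [← hge]; exact hBg
      exact aworks_of_add hA hw
    have := aworks_mul_odd hAe heodd
    rwa [Nat.mul_div_cancel' he] at this

lemma fiber_mem (hg : 0 < g) {d : ℕ} (hd : 0 < d) (hdg : d ∣ g) (hodd : Odd (g / d))
    {b : ZMod (2 * g) → Bool} (hb : AWorks g b d) :
    period g b / 2 ∈ d.divisors.filter (fun e => Odd (d / e)) := by
  have hBg := aworks_isBg hg hdg hodd hb
  obtain ⟨e', he'pos, he'g, he'odd, hpe⟩ := period_shape hg hBg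
  have hdvd2 : period g b ∣ 2 * d := period_dvd hg (aworks_two hb)
  have he'd : e' ∣ d := by
    rw [hpe] at hdvd2
    exact (mul_dvd_mul_iff_left two_ne_zero).mp hdvd2
  have hde'odd : Odd (d / e') := odd_div_of_dvd he'pos he'd hdg he'odd
  have h6 : period g b / 2 = e' := by omega
  rw [h6]
  simp only [Finset.mem_filter, Nat.mem_divisors]
  exact ⟨⟨he'd, by omega⟩, hde'odd⟩

lemma pow_eq_sum (hg : 0 < g) {d : ℕ} (hd : 0 < d) (hdg : d ∣ g) (hodd : Odd (g / d)) :
    (2 ^ d : ℕ) = ∑ e ∈ d.divisors.filter (fun e => Odd (d / e)),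
      Nat.card {b : ZMod (2 * g) → Bool // IsBg g b ∧ period g b = 2 * e} := by
  classical
  haveI : NeZero (2 * g) := ⟨by omega⟩
  have h1 : Nat.card {b : ZMod (2 * g) → Bool // AWorks g b d}
      = (Finset.univ.filter (fun b : ZMod (2 * g) → Bool => AWorks g b d)).card := by
    rw [Nat.card_eq_fintype_card, Fintype.card_subtype]
  rw [← card_aworks hg hd hdg, h1,
    Finset.card_eq_sum_card_fiberwise (f := fun b => period g b / 2)
      (t := d.divisors.filter fun e => Odd (d / e))
      (fun b hb => fiber_mem hg hd hdg hodd (by simpa using hb))]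
  apply Finset.sum_congr rfl
  intro e he
  simp only [Finset.mem_filter, Nat.mem_divisors] at he
  rw [Nat.card_eq_fintype_card, Fintype.card_subtype]
  congr 1
  ext b
  simp only [Finset.mem_filter, Finset.mem_univ, true_and]
  exact fiber_iff hg hd hdg hodd he.1.1 he.2 b


lemma mem_shiftOrbit_self (b : ZMod (2 * g) → Bool) : b ∈ shiftOrbit g b :=
  ⟨0, by funext i; rw [add_zero]⟩

lemma shiftOrbit_eq {b c : ZMod (2 * g) → Bool} (h : c ∈ shiftOrbit g b) :
    shiftOrbit g c = shiftOrbit g b := by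
  obtain ⟨s, rfl⟩ := h
  ext x
  constructor
  · rintro ⟨t, rfl⟩
    exact ⟨t + s, by funext i; simp only; rw [← add_assoc]⟩
  · rintro ⟨r, rfl⟩
    refine ⟨r - s, ?_⟩
    funext i
    simp only
    rw [add_assoc, sub_add_cancel]

lemma isBg_shift {b : ZMod (2 * g) → Bool} (hb : IsBg g b) (s : ZMod (2 * g)) :
    IsBg g (fun i => b (i + s)) := by
  intro i
  simp only
  have := hb (i + s)
  rwa [add_right_comm] at this

lemma works_shift_iff (b : ZMod (2 * g) → Bool) (s : ZMod (2 * g)) (k : ℕ) :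
    Works g (fun i => b (i + s)) k ↔ Works g b k := by
  constructor
  · intro h j
    have := h (j - s)
    simp only at this
    have e1 : j - s + (k : ZMod (2 * g)) + s = j + (k : ZMod (2 * g)) := by ring
    have e2 : j - s + s = j := by ring
    rwa [e1, e2] at this
  · intro h i
    simp only
    have := h (i + s)
    have e : i + s + (k : ZMod (2 * g)) = i + (k : ZMod (2 * g)) + s := by ring
    rwa [e] at this

lemma period_shift (b : ZMod (2 * g) → Bool) (s : ZMod (2 * g)) :
    period g (fun i => b (i + s)) = period g b := by
  unfold period
  congr 1
  ext k
  simp only [Set.mem_setOf_eq]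
  exact and_congr_right fun _ => works_shift_iff b s k

lemma card_orbits_mul (hg : 0 < g) :
    Nat.card {S : Set (ZMod (2 * g) → Bool) |
        ∃ b : ZMod (2 * g) → Bool, IsBg g b ∧ period g b = 2 * g ∧ S = shiftOrbit g b} * (2 * g)
      = Nat.card {b : ZMod (2 * g) → Bool // IsBg g b ∧ period g b = 2 * g} := by
  haveI : NeZero (2 * g) := ⟨by omega⟩
  set OS : Set (Set (ZMod (2 * g) → Bool)) := {S : Set (ZMod (2 * g) → Bool) |
    ∃ b : ZMod (2 * g) → Bool, IsBg g b ∧ period g b = 2 * g ∧ S = shiftOrbit g b} with hOS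
  have key : ∀ S : OS, ∃ b, (IsBg g b ∧ period g b = 2 * g) ∧ S.1 = shiftOrbit g b := by
    rintro ⟨S, b, h1, h2, h3⟩
    exact ⟨b, ⟨h1, h2⟩, h3⟩
  choose rep hrep hrepS using key
  let Φ : OS × ZMod (2 * g) → {b : ZMod (2 * g) → Bool // IsBg g b ∧ period g b = 2 * g} :=
    fun p => ⟨fun i => rep p.1 (i + p.2),
      isBg_shift (hrep p.1).1 _, by rw [period_shift]; exact (hrep p.1).2⟩
  have hbij : Function.Bijective Φ := by
    constructor
    · rintro ⟨S, s⟩ ⟨T, t⟩ h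
      have h1 : (fun i => rep S (i + s)) = (fun i => rep T (i + t)) := congrArg Subtype.val h
      have hp1 : (fun i => rep S (i + s)) ∈ shiftOrbit g (rep S) := ⟨s, rfl⟩
      have hq1 : (fun i => rep T (i + t)) ∈ shiftOrbit g (rep T) := ⟨t, rfl⟩
      have hSS : S.1 = T.1 := by
        rw [hrepS S, hrepS T, ← shiftOrbit_eq hp1, ← shiftOrbit_eq hq1, h1]
      have hS : S = T := Subtype.ext hSS
      subst hS
      have hst : s = t := by
        by_contra hst
        have hw : Works g (rep S) ((s - t).val) := by
          intro j
          have e0 : (((s - t).val : ℕ) : ZMod (2 * g)) = s - t :=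
            ZMod.natCast_rightInverse (s - t)
          rw [e0]
          have := congrFun h1 (j - t)
          have e1 : j - t + s = j + (s - t) := by ring
          have e2 : j - t + t = j := by ring
          rwa [e1, e2] at this
        have hval : 0 < (s - t).val := ZMod.val_pos.mpr (sub_ne_zero.mpr hst)
        have hle : period g (rep S) ≤ (s - t).val := Nat.sInf_le ⟨hval, hw⟩
        have hlt : (s - t).val < 2 * g := ZMod.val_lt _
        have := (hrep S).2
        omega
      rw [hst]
    · rintro ⟨b, hb⟩
      have hSO : shiftOrbit g b ∈ OS := ⟨b, hb.1, hb.2, rfl⟩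
      have hbS : b ∈ shiftOrbit g (rep ⟨shiftOrbit g b, hSO⟩) := by
        have := hrepS ⟨shiftOrbit g b, hSO⟩
        simp only at this
        rw [← this]
        exact mem_shiftOrbit_self b
      obtain ⟨s, hs⟩ := hbS
      exact ⟨(⟨shiftOrbit g b, hSO⟩, s), Subtype.ext hs.symm⟩
  have hcard := Nat.card_eq_of_bijective Φ hbij
  rw [Nat.card_prod, Nat.card_zmod] at hcard
  exact hcard


lemma odd_of_dvd_odd {m u : ℕ} (hm : m ∣ u) (hu : Odd u) : Odd m := by
  obtain ⟨k, rfl⟩ := hm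
  exact (Nat.odd_mul.mp hu).1

end Stmt8Aux

open Stmt8Aux in
theorem stmt8 (g : ℕ) (hg : 0 < g) :
    (2 * g : ℤ) * Nat.card {S : Set (ZMod (2 * g) → Bool) |
        ∃ b : ZMod (2 * g) → Bool, IsBg g b ∧ period g b = 2 * g ∧ S = shiftOrbit g b} =
      ∑ x ∈ g.divisors.filter (fun x => Odd x),
        ArithmeticFunction.moebius x * 2 ^ (g / x) := by
  classical
  obtain ⟨v, u, hu2, hgu⟩ := Nat.exists_eq_pow_mul_and_not_dvd hg.ne' 2 (by norm_num)
  have huodd : Odd u := Nat.odd_iff.mpr (by omega)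
  have hupos : 0 < u := by
    have := Nat.odd_iff.mp huodd; omega
  have hvpos : 0 < (2 : ℕ) ^ v := by positivity
  set f : ℕ → ℤ := fun s =>
    (Nat.card {b : ZMod (2 * g) → Bool // IsBg g b ∧ period g b = 2 * (2 ^ v * s)} : ℤ) with hf
  set G : ℕ → ℤ := fun n => 2 ^ (2 ^ v * n) with hG
  have hdiv : ∀ n > 0, n ∈ {x : ℕ | x ∣ u} → (∑ i ∈ n.divisors, f i) = G n := by
    intro n hn hnu
    simp only [Set.mem_setOf_eq] at hnu
    have hdpos : 0 < 2 ^ v * n := by positivity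
    have hd : 2 ^ v * n ∣ g := by rw [hgu]; exact mul_dvd_mul_left _ hnu
    have hquot : g / (2 ^ v * n) = u / n := by
      rw [hgu, Nat.mul_div_mul_left _ _ hvpos]
    have hodd' : Odd (g / (2 ^ v * n)) := by
      rw [hquot]
      exact odd_of_dvd_odd (Nat.div_dvd_of_dvd hnu) huodd
    have hsum := pow_eq_sum hg hdpos hd hodd'
    have himg : (2 ^ v * n).divisors.filter (fun e => Odd (2 ^ v * n / e))
        = n.divisors.image (fun s => 2 ^ v * s) := by
      ext e
      simp only [Finset.mem_filter, Nat.mem_divisors, Finset.mem_image]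
      constructor
      · rintro ⟨⟨hed, hne⟩, hodd2⟩
        have hmul : e * (2 ^ v * n / e) = 2 ^ v * n := Nat.mul_div_cancel' hed
        have hcop : Nat.Coprime (2 ^ v) (2 ^ v * n / e) :=
          Nat.Coprime.pow_left _ (Nat.coprime_two_left.mpr hodd2)
        have h2e : 2 ^ v ∣ e := by
          apply hcop.dvd_of_dvd_mul_right
          rw [hmul]
          exact Dvd.intro n rfl
        obtain ⟨s, rfl⟩ := h2e
        refine ⟨s, ⟨?_, by omega⟩, rfl⟩
        exact (mul_dvd_mul_iff_left (a := (2:ℕ) ^ v) (by positivity)).mp hed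
      · rintro ⟨s, ⟨hs, hne⟩, rfl⟩
        have h2 : 2 ^ v * n / (2 ^ v * s) = n / s := Nat.mul_div_mul_left _ _ hvpos
        refine ⟨⟨mul_dvd_mul_left _ hs, by positivity⟩, ?_⟩
        rw [h2]
        exact odd_of_dvd_odd (Nat.div_dvd_of_dvd hs)
          (odd_of_dvd_odd hnu huodd)
    rw [himg, Finset.sum_image (fun a _ b _ h => by
      exact Nat.eq_of_mul_eq_mul_left hvpos h)] at hsum
    rw [hG]
    simp only [hf]
    rw [← Nat.cast_sum]
    exact_mod_cast hsum.symm
  have hinv := (ArithmeticFunction.sum_eq_iff_sum_smul_moebius_eq_on {x : ℕ | x ∣ u}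
    (fun m n hmn hn => hmn.trans hn)).mp hdiv u hupos (by simp)
  -- hinv : ∑ x ∈ u.divisorsAntidiagonal, μ x.1 • G x.2 = f u
  rw [Nat.sum_divisorsAntidiagonal (f := fun x y => (ArithmeticFunction.moebius x : ℤ) • G y)]
    at hinv
  have hOS := card_orbits_mul hg
  have hgu2 : 2 ^ v * u = g := hgu.symm
  have hfu : f u = (Nat.card {b : ZMod (2 * g) → Bool // IsBg g b ∧ period g b = 2 * g} : ℤ) := by
    simp only [hf, hgu2]
  have hfilter : g.divisors.filter (fun x => Odd x) = u.divisors := by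
    ext x
    simp only [Finset.mem_filter, Nat.mem_divisors]
    constructor
    · rintro ⟨⟨hxg, -⟩, hodd⟩
      refine ⟨?_, by omega⟩
      have hcop : Nat.Coprime x (2 ^ v) :=
        Nat.Coprime.pow_right _ (Nat.coprime_two_right.mpr hodd)
      exact hcop.dvd_of_dvd_mul_left (hgu ▸ hxg)
    · rintro ⟨hxu, -⟩
      have hug : u ∣ g := by rw [hgu]; exact Dvd.intro_left _ rfl
      exact ⟨⟨hxu.trans hug, hg.ne'⟩, odd_of_dvd_odd hxu huodd⟩
  rw [hfilter]
  have hmain : (2 * g) * Nat.card {S : Set (ZMod (2 * g) → Bool) |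
      ∃ b : ZMod (2 * g) → Bool, IsBg g b ∧ period g b = 2 * g ∧ S = shiftOrbit g b}
      = Nat.card {b : ZMod (2 * g) → Bool // IsBg g b ∧ period g b = 2 * g} := by
    rw [← hOS]; ring
  calc (2 * (g : ℤ)) * Nat.card {S : Set (ZMod (2 * g) → Bool) |
      ∃ b : ZMod (2 * g) → Bool, IsBg g b ∧ period g b = 2 * g ∧ S = shiftOrbit g b}
      = (Nat.card {b : ZMod (2 * g) → Bool // IsBg g b ∧ period g b = 2 * g} : ℤ) := by
        exact_mod_cast congrArg (Nat.cast : ℕ → ℤ) hmain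
    _ = f u := hfu.symm
    _ = ∑ x ∈ u.divisors, (ArithmeticFunction.moebius x : ℤ) • G (u / x) := hinv.symm
    _ = ∑ x ∈ u.divisors, ArithmeticFunction.moebius x * 2 ^ (g / x) := by
        apply Finset.sum_congr rfl
        intro x hx
        have hxu : x ∣ u := Nat.dvd_of_mem_divisors hx
        have hgx : g / x = 2 ^ v * (u / x) := by
          rw [hgu, Nat.mul_div_assoc _ hxu]
        rw [hgx, smul_eq_mul, hG]
end
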